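/- arXiv:2310.18814 — 2 statements merged into one kernel-verified Lean document; each statement's English description precedes it below -/
import Mathlib

section
/- Let n ≥ 1 and let (r_1, ..., r_{n+1}) be an exchangeable random vector of real random variables whose coordinates are almost surely pairwise distinct. Let α ∈ (1/(n+1), 1) and let k = ⌈(1 − α)(n + 1)⌉. Then P(r_{n+1} ≤ r_{(k)}) = ⌈(1 − α)(n + 1)⌉ / (n + 1); in particular 1 − α ≤ P(r_{n+1} ≤ r_{(k)}) ≤ 1 − α + 1/(n + 1), where r_{(k)} denotes the k-th smallest value among r_1, ..., r_n. -/
/-!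
Let `rank v i` be the number of coordinates of `v` strictly below `v i`. Whenever the
coordinates are distinct, `rank v` is a bijection onto `{0, …, n}`, so exactly `k` of the `n + 1`
events `{rank r i < k}` occur; by exchangeability these events are equally likely, so each has
probability `k / (n + 1)`. Finally, `r (last) ≤ r_(k)` says precisely that fewer than `k` of the
other coordinates lie below `r (last)`, i.e. `rank r (last) < k`.
-/

open MeasureTheory

/-- The `k`-th smallest value (1-indexed) among `v 0, ..., v (n-1)`. -/
noncomputable def kthSmallest {n : ℕ} (k : ℕ) (v : Fin n → ℝ) : ℝ :=
  (Multiset.sort (Multiset.map v Finset.univ.val) (· ≤ ·)).getD (k - 1) 0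

open Finset Function
open scoped ENNReal

namespace List

variable {α : Type*} [LinearOrder α] {L : List α}

theorem Pairwise.length_filter_lt_le_of_le_getElem (hL : L.Pairwise (· ≤ ·)) {x : α} {i : ℕ}
    (hi : i < L.length) (hx : x ≤ L[i]) : (L.filter (· < x)).length ≤ i := by
  have hdrop : (L.drop i).filter (· < x) = [] := by
    refine filter_eq_nil_iff.mpr fun b hb => ?_
    obtain ⟨j, hj, rfl⟩ := mem_iff_getElem.mp hb
    rw [length_drop] at hj
    rw [getElem_drop]
    simpa using hx.trans (hL.rel_get_of_le (a := ⟨i, hi⟩) (b := ⟨i + j, by omega⟩)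
      (Nat.le_add_right i j))
  calc (L.filter (· < x)).length = ((L.take i).filter (· < x)).length := by
        rw [← take_append_drop i L, filter_append, hdrop, append_nil, take_append_drop]
    _ ≤ (L.take i).length := length_filter_le _ _
    _ ≤ i := length_take_le _ _

theorem Pairwise.lt_length_filter_lt_of_getElem_lt (hL : L.Pairwise (· ≤ ·)) {x : α} {i : ℕ}
    (hi : i < L.length) (hx : L[i] < x) : i < (L.filter (· < x)).length := by
  have htake : (L.take (i + 1)).filter (· < x) = L.take (i + 1) := by
    refine filter_eq_self.mpr fun b hb => ?_
    obtain ⟨j, hj, rfl⟩ := mem_iff_getElem.mp hb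
    rw [length_take] at hj
    rw [getElem_take]
    simpa using (hL.rel_get_of_le (a := ⟨j, by omega⟩) (b := ⟨i, hi⟩)
      (show j ≤ i by omega)).trans_lt hx
  calc i < (L.take (i + 1)).length := by rw [length_take]; omega
    _ = ((L.take (i + 1)).filter (· < x)).length := by rw [htake]
    _ ≤ (L.filter (· < x)).length := ((take_sublist _ L).filter _).length_le

theorem Pairwise.le_getElem_iff_length_filter_lt_le (hL : L.Pairwise (· ≤ ·)) {x : α} {i : ℕ}
    (hi : i < L.length) : x ≤ L[i] ↔ (L.filter (· < x)).length ≤ i := by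
  refine ⟨hL.length_filter_lt_le_of_le_getElem hi, fun h => ?_⟩
  by_contra! hlt
  exact (hL.lt_length_filter_lt_of_getElem_lt hi hlt).not_ge h

end List

theorem le_kthSmallest_iff {n k : ℕ} (w : Fin n → ℝ) (x : ℝ) (hk : 1 ≤ k) (hkn : k ≤ n) :
    x ≤ kthSmallest k w ↔ #{j | w j < x} < k := by
  set L := Multiset.sort (Multiset.map w univ.val) (· ≤ ·)
  have hlen : L.length = n := by simp [L]
  have hcount : (L.filter (· < x)).length = #{j | w j < x} := by
    rw [← List.countP_eq_length_filter, ← Multiset.coe_countP, Multiset.sort_eq,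
      Multiset.countP_map, card_def, filter_val]
  change x ≤ L.getD (k - 1) 0 ↔ _
  rw [List.getD_eq_getElem _ _ (by omega),
    (Multiset.pairwise_sort _ _).le_getElem_iff_length_filter_lt_le, hcount]
  omega

section Rank

variable {ι α : Type*} [Fintype ι] [LinearOrder α]

def rank (v : ι → α) (i : ι) : ℕ := #{j | v j < v i}

theorem rank_lt_card (v : ι → α) (i : ι) : rank v i < Fintype.card ι :=
  card_lt_card (filter_ssubset.mpr ⟨i, mem_univ i, lt_irrefl _⟩)

theorem rank_lt_rank {v : ι → α} {i j : ι} (h : v i < v j) : rank v i < rank v j := by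
  refine card_lt_card (ssubset_iff_of_subset ?_ |>.mpr ⟨i, by simpa using h, by simp⟩)
  intro l hl
  simp only [mem_filter, mem_univ, true_and] at hl ⊢
  exact hl.trans h

theorem rank_injective {v : ι → α} (hv : Injective v) : Injective (rank v) := by
  intro i j hij
  rcases lt_trichotomy (v i) (v j) with h | h | h
  · exact absurd hij (rank_lt_rank h).ne
  · exact hv h
  · exact absurd hij (rank_lt_rank h).ne'

theorem card_rank_lt {v : ι → α} (hv : Injective v) {k : ℕ} (hk : k ≤ Fintype.card ι) :
    #{i | rank v i < k} = k := by
  have himage : univ.image (rank v) = range (Fintype.card ι) :=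
    eq_of_subset_of_card_le (fun _ hm => by
        obtain ⟨i, -, rfl⟩ := mem_image.mp hm
        exact mem_range.mpr (rank_lt_card v i))
      (by rw [card_range, card_image_of_injective _ (rank_injective hv), card_univ])
  have hfilter : (range (Fintype.card ι)).filter (· < k) = range k := by
    ext m
    simp only [mem_filter, mem_range]
    omega
  rw [← card_image_of_injective _ (rank_injective hv), ← filter_image (p := (· < k)), himage,
    hfilter, card_range]

theorem rank_comp_perm (v : ι → α) (σ : Equiv.Perm ι) (i : ι) :
    rank (v ∘ σ) i = rank v (σ i) := by
  simp only [rank, card_filter, comp_apply]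
  exact Equiv.sum_comp σ (fun j => if v j < v (σ i) then 1 else 0)

theorem rank_last {n : ℕ} (v : Fin (n + 1) → α) :
    rank v (Fin.last n) = #{j : Fin n | v j.castSucc < v (Fin.last n)} := by
  simp only [rank, card_filter, Fin.sum_univ_castSucc, lt_irrefl, if_false, add_zero]

end Rank

section Exchangeable

variable {Ω ι : Type*} [MeasurableSpace Ω] [Fintype ι] {P : Measure Ω} {X : Ω → ι → ℝ}

theorem measurable_rank (i : ι) : Measurable fun v : ι → ℝ => rank v i := by
  simp only [rank, card_filter]
  exact Finset.measurable_sum _ fun j _ => Measurable.ite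
    (measurableSet_lt (measurable_pi_apply j) (measurable_pi_apply i)) measurable_const
    measurable_const

theorem measurableSet_rank_lt (hX : Measurable X) (i : ι) (k : ℕ) :
    MeasurableSet {ω | rank (X ω) i < k} :=
  measurableSet_lt ((measurable_rank i).comp hX) measurable_const

theorem measure_rank_lt_comp_perm (hX : Measurable X)
    (hexch : ∀ σ : Equiv.Perm ι, P.map (fun ω => X ω ∘ σ) = P.map X) (σ : Equiv.Perm ι)
    (i : ι) (k : ℕ) : P {ω | rank (X ω) (σ i) < k} = P {ω | rank (X ω) i < k} := by
  have hXσ : Measurable fun ω => X ω ∘ σ :=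
    measurable_pi_iff.mpr fun j => (measurable_pi_apply (σ j)).comp hX
  have hB : MeasurableSet {v : ι → ℝ | rank v i < k} :=
    measurableSet_lt (measurable_rank i) measurable_const
  calc P {ω | rank (X ω) (σ i) < k} = P.map (fun ω => X ω ∘ σ) {v | rank v i < k} := by
        rw [Measure.map_apply hXσ hB]
        simp only [Set.preimage, Set.mem_ofPred_eq, rank_comp_perm]
    _ = P {ω | rank (X ω) i < k} := by rw [hexch, Measure.map_apply hX hB]; rfl

theorem sum_measure_rank_lt [IsProbabilityMeasure P] (hX : Measurable X)
    (hinj : ∀ᵐ ω ∂P, Injective (X ω)) {k : ℕ} (hk : k ≤ Fintype.card ι) :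
    ∑ i, P {ω | rank (X ω) i < k} = k := by
  have hcount : ∀ᵐ ω ∂P, ∑ i, {ω | rank (X ω) i < k}.indicator (1 : Ω → ℝ≥0∞) ω = k := by
    filter_upwards [hinj] with ω hω
    simp only [Set.indicator_apply, Set.mem_ofPred_eq, Pi.one_apply, sum_boole,
      card_rank_lt hω hk]
  calc ∑ i, P {ω | rank (X ω) i < k}
      = ∑ i, ∫⁻ ω, {ω | rank (X ω) i < k}.indicator 1 ω ∂P := by
        simp only [lintegral_indicator_one (measurableSet_rank_lt hX _ _)]
    _ = ∫⁻ ω, ∑ i, {ω | rank (X ω) i < k}.indicator 1 ω ∂P :=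
        (lintegral_finsetSum _ fun i _ =>
          measurable_const.indicator (measurableSet_rank_lt hX i k)).symm
    _ = k := by rw [lintegral_congr_ae hcount, lintegral_const, measure_univ, mul_one]

theorem measure_rank_lt_of_exchangeable [IsProbabilityMeasure P] (hX : Measurable X)
    (hexch : ∀ σ : Equiv.Perm ι, P.map (fun ω => X ω ∘ σ) = P.map X)
    (hinj : ∀ᵐ ω ∂P, Injective (X ω)) (i : ι) {k : ℕ} (hk : k ≤ Fintype.card ι) :
    P {ω | rank (X ω) i < k} = k / Fintype.card ι := by
  classical
  have : Nonempty ι := ⟨i⟩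
  have hsum := sum_measure_rank_lt hX hinj hk
  rw [Fintype.sum_congr _ (fun _ => P {ω | rank (X ω) i < k}) fun j => by
      simpa using (measure_rank_lt_comp_perm hX hexch (Equiv.swap i j) j k).symm,
    sum_const, card_univ, nsmul_eq_mul] at hsum
  rw [ENNReal.eq_div_iff (by simp) (by simp), hsum]

end Exchangeable

theorem Nat.le_ceil_mul_div (a : ℝ) {m : ℝ} (hm : 0 < m) : a ≤ ⌈a * m⌉₊ / m :=
  (le_div_iff₀ hm).mpr (Nat.le_ceil _)

theorem Nat.ceil_mul_div_le {a m : ℝ} (ha : 0 ≤ a) (hm : 0 < m) :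
    ⌈a * m⌉₊ / m ≤ a + 1 / m := by
  rw [div_le_iff₀ hm, add_mul, one_div_mul_cancel hm.ne']
  exact (Nat.ceil_lt_add_one (by positivity)).le

theorem ceil_one_sub_mul_mem_Icc {n : ℕ} {α : ℝ} (hα : α ∈ Set.Ioo (1 / ((n : ℝ) + 1)) 1) :
    ⌈(1 - α) * ((n : ℝ) + 1)⌉₊ ∈ Set.Icc 1 n := by
  obtain ⟨hα₁, hα₂⟩ := hα
  rw [div_lt_iff₀ (by positivity)] at hα₁
  refine ⟨Nat.one_le_iff_ne_zero.mpr (Nat.ceil_pos.mpr ?_).ne', Nat.ceil_le.mpr ?_⟩ <;>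
    nlinarith

theorem stmt13_general {Ω : Type*} [MeasurableSpace Ω] (P : Measure Ω) [IsProbabilityMeasure P]
    (n : ℕ) (r : Fin (n+1) → Ω → ℝ)
    (hmeas : ∀ i, Measurable (r i))
    (hexch : ∀ σ : Equiv.Perm (Fin (n+1)),
      P.map (fun ω => fun i => r (σ i) ω) = P.map (fun ω => fun i => r i ω))
    (hdist : ∀ᵐ ω ∂P, ∀ i j : Fin (n+1), i ≠ j → r i ω ≠ r j ω)
    (α : ℝ) (hα : α ∈ Set.Ioo (1/((n:ℝ)+1)) 1) :
    (P {ω | r (Fin.last n) ω ≤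
        kthSmallest ⌈(1 - α) * ((n:ℝ)+1)⌉₊ (fun i : Fin n => r i.castSucc ω)}).toReal
      = (⌈(1 - α) * ((n:ℝ)+1)⌉₊ : ℝ) / ((n:ℝ)+1) ∧
    1 - α ≤
      (P {ω | r (Fin.last n) ω ≤
        kthSmallest ⌈(1 - α) * ((n:ℝ)+1)⌉₊ (fun i : Fin n => r i.castSucc ω)}).toReal ∧
    (P {ω | r (Fin.last n) ω ≤
        kthSmallest ⌈(1 - α) * ((n:ℝ)+1)⌉₊ (fun i : Fin n => r i.castSucc ω)}).toReal
      ≤ 1 - α + 1/((n:ℝ)+1) := by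
  obtain ⟨hk₁, hkn⟩ := ceil_one_sub_mul_mem_Icc hα
  set k := ⌈(1 - α) * ((n:ℝ)+1)⌉₊
  set X : Ω → Fin (n + 1) → ℝ := fun ω i => r i ω
  have hevent : {ω | r (Fin.last n) ω ≤ kthSmallest k (fun i : Fin n => r i.castSucc ω)}
      = {ω | rank (X ω) (Fin.last n) < k} := by
    ext ω
    simp only [Set.mem_ofPred_eq, rank_last, le_kthSmallest_iff _ _ hk₁ hkn, X]
  have hinj : ∀ᵐ ω ∂P, Injective (X ω) :=
    hdist.mono fun ω h i j => not_imp_not.mp (h i j)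
  have hprob : (P {ω | rank (X ω) (Fin.last n) < k}).toReal = k / ((n : ℝ) + 1) := by
    rw [measure_rank_lt_of_exchangeable (measurable_pi_lambda _ hmeas) hexch hinj _
      (by rw [Fintype.card_fin]; omega), ENNReal.toReal_div, Fintype.card_fin,
      ENNReal.toReal_natCast, ENNReal.toReal_natCast, Nat.cast_succ]
  rw [hevent, hprob]
  exact ⟨rfl, Nat.le_ceil_mul_div _ (by positivity),
    Nat.ceil_mul_div_le (by linarith [hα.2]) (by positivity)⟩

/-- Let `(r 0, ..., r n)` be an exchangeable random vector of `n+1` real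
random variables whose coordinates are a.s. pairwise distinct, `α ∈ (1/(n+1), 1)` and
`k = ⌈(1 − α)(n + 1)⌉`. Then `P(r (last) ≤ r_(k)) = ⌈(1 − α)(n + 1)⌉/(n + 1)`; in particular
`1 − α ≤ P(r (last) ≤ r_(k)) ≤ 1 − α + 1/(n + 1)`, where `r_(k)` is the `k`-th smallest
among the first `n` coordinates. -/
theorem stmt13 {Ω : Type*} [MeasurableSpace Ω] (P : Measure Ω) [IsProbabilityMeasure P]
    (n : ℕ) (hn : 1 ≤ n) (r : Fin (n+1) → Ω → ℝ)
    (hmeas : ∀ i, Measurable (r i))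
    (hexch : ∀ σ : Equiv.Perm (Fin (n+1)),
      P.map (fun ω => fun i => r (σ i) ω) = P.map (fun ω => fun i => r i ω))
    (hdist : ∀ᵐ ω ∂P, ∀ i j : Fin (n+1), i ≠ j → r i ω ≠ r j ω)
    (α : ℝ) (hα : α ∈ Set.Ioo (1/((n:ℝ)+1)) 1) :
    (P {ω | r (Fin.last n) ω ≤
        kthSmallest ⌈(1 - α) * ((n:ℝ)+1)⌉₊ (fun i : Fin n => r i.castSucc ω)}).toReal
      = (⌈(1 - α) * ((n:ℝ)+1)⌉₊ : ℝ) / ((n:ℝ)+1) ∧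
    1 - α ≤
      (P {ω | r (Fin.last n) ω ≤
        kthSmallest ⌈(1 - α) * ((n:ℝ)+1)⌉₊ (fun i : Fin n => r i.castSucc ω)}).toReal ∧
    (P {ω | r (Fin.last n) ω ≤
        kthSmallest ⌈(1 - α) * ((n:ℝ)+1)⌉₊ (fun i : Fin n => r i.castSucc ω)}).toReal
      ≤ 1 - α + 1/((n:ℝ)+1) :=
  stmt13_general P n r hmeas hexch hdist α hα
end

section
/- Let n ≥ 1 and let a_1, ..., a_n, b_1, ..., b_n be real random variables on a common probability space. Let ε ∈ ℝ and ν ∈ (0,1], and suppose P(b_i > a_i + ε) ≤ ν for every i ∈ {1, ..., n}. Let α satisfy 1/(n+1) + √ν ≤ α < 1. Then P(q_{n,α}{b_i} > q_{n,α−√ν}{a_i} + ε) ≤ n√ν / (n + 1) ≤ √ν. -/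
/-!
Let `ka ≥ kb` be the ranks defining `q_{n,α-√ν}{a i}` and `q_{n,α}{b i}`. If
`q_{n,α}{b i} > q_{n,α-√ν}{a i} + ε =: q + ε`, then at least `ka` of the `a i` are `≤ q` while fewer
than `kb` of the `b i` are `≤ q + ε`, so `b i > a i + ε` for at least `ka - kb + 1 > √ν (n + 1)`
indices. The expected number of such indices is at most `n ν`, and Markov's inequality gives the
bound `n ν / (√ν (n + 1))`.
-/

open MeasureTheory

/-- For `β ≥ 1/(n+1)`, `q_{n,β}{v}` is the `⌈(1 − β)(n + 1)⌉`-th smallest value among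
`v 0, ..., v (n-1)`. -/
noncomputable def empQuantile {n : ℕ} (β : ℝ) (v : Fin n → ℝ) : ℝ :=
  kthSmallest ⌈(1 - β) * ((n:ℝ) + 1)⌉₊ v

open Finset
open scoped ENNReal

section OrderStatistics

variable {n : ℕ} (v : Fin n → ℝ)

local notation "sorted" => Multiset.sort (Multiset.map v Finset.univ.val) (· ≤ ·)

lemma length_sort_map_univ : (sorted).length = n := by
  simp

lemma card_filter_eq_countP_sort (t : ℝ) : #{i | v i ≤ t} = (sorted).countP (· ≤ t) := by
  rw [← Multiset.coe_countP, Multiset.sort_eq, Multiset.countP_map]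
  rfl

lemma le_card_filter_le_kthSmallest {k : ℕ} (hk : k ≤ n) : k ≤ #{i | v i ≤ kthSmallest k v} := by
  obtain _ | j := k
  · exact Nat.zero_le _
  have hj : j < (sorted).length := by rw [length_sort_map_univ]; omega
  have hmono := (Multiset.pairwise_sort (Multiset.map v univ.val) (· ≤ ·)).sortedLE.monotone_get
  rw [card_filter_eq_countP_sort, kthSmallest, Nat.add_sub_cancel, List.getD_eq_getElem _ _ hj]
  calc j + 1 = ((sorted).take (j + 1)).length := by simp; omega
    _ = ((sorted).take (j + 1)).countP (· ≤ (sorted)[j]) := by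
      refine (List.countP_eq_length.2 fun x hx => ?_).symm
      obtain ⟨i, hi, rfl⟩ := List.mem_iff_getElem.1 hx
      simp only [List.length_take, lt_min_iff] at hi
      simpa [List.getElem_take] using hmono (a := ⟨i, hi.2⟩) (b := ⟨j, hj⟩) (by simp; omega)
    _ ≤ (sorted).countP (· ≤ (sorted)[j]) := (List.take_sublist _ _).countP_le

lemma card_filter_le_lt_of_lt_kthSmallest {k : ℕ} (hk : 1 ≤ k) {t : ℝ} (ht : t < kthSmallest k v) :
    #{i | v i ≤ t} < k := by
  by_cases hkn : n < k
  · exact (card_le_univ _).trans_lt (by simpa using hkn)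
  have hj : k - 1 < (sorted).length := by rw [length_sort_map_univ]; omega
  have hmono := (Multiset.pairwise_sort (Multiset.map v univ.val) (· ≤ ·)).sortedLE.monotone_get
  rw [kthSmallest, List.getD_eq_getElem _ _ hj] at ht
  have hdrop : ((sorted).drop (k - 1)).countP (· ≤ t) = 0 := by
    refine List.countP_eq_zero.2 fun x hx => ?_
    obtain ⟨i, hi, rfl⟩ := List.mem_iff_getElem.1 hx
    simp only [List.length_drop] at hi
    have := hmono (a := ⟨k - 1, hj⟩) (b := ⟨k - 1 + i, by omega⟩) (by simp)
    simp only [List.getElem_drop, decide_eq_true_eq, not_le]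
    exact ht.trans_le this
  rw [card_filter_eq_countP_sort, ← List.take_append_drop (k - 1) (sorted), List.countP_append,
    hdrop, add_zero]
  exact List.countP_le_length.trans_lt (by simp; omega)

end OrderStatistics

lemma add_one_le_card_add_of_kthSmallest_add_lt {n : ℕ} (va vb : Fin n → ℝ) (ε : ℝ) {ka kb : ℕ}
    (hka : ka ≤ n) (hkb : 1 ≤ kb) (h : kthSmallest ka va + ε < kthSmallest kb vb) :
    ka + 1 ≤ #{i | va i + ε < vb i} + kb := by
  set q := kthSmallest ka va
  let S : Finset (Fin n) := {i | va i ≤ q}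
  let T : Finset (Fin n) := {i | vb i ≤ q + ε}
  have hsub : S \ T ⊆ ({i | va i + ε < vb i} : Finset (Fin n)) := by
    intro i
    simp only [S, T, mem_sdiff, mem_filter, mem_univ, true_and, not_le]
    intro hi
    linarith
  have hS : ka ≤ #S := le_card_filter_le_kthSmallest va hka
  have hT : #T < kb := card_filter_le_lt_of_lt_kthSmallest vb hkb h
  have := card_le_card_sdiff_add_card (s := S) (t := T)
  have := card_le_card hsub
  omega

lemma mul_measure_le_card_mem_le_sum {ι Ω : Type*} [Fintype ι] [MeasurableSpace Ω] (μ : Measure Ω)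
    {A : ι → Set Ω} [∀ i, DecidablePred (· ∈ A i)] (hA : ∀ i, MeasurableSet (A i)) (m : ℕ) :
    m * μ {ω | m ≤ #{i | ω ∈ A i}} ≤ ∑ i, μ (A i) := by
  let f : Ω → ℝ≥0∞ := fun ω => ∑ i, (A i).indicator 1 ω
  have hf : ∀ ω, f ω = #{i | ω ∈ A i} := fun ω => by
    simp [f, Set.indicator_apply]
  have hfmeas : Measurable f := Finset.measurable_sum _ fun i _ => measurable_one.indicator (hA i)
  calc (m : ℝ≥0∞) * μ {ω | m ≤ #{i | ω ∈ A i}} = m * μ {ω | (m : ℝ≥0∞) ≤ f ω} := by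
        simp_rw [hf, Nat.cast_le]
    _ ≤ ∫⁻ ω, f ω ∂μ := mul_meas_ge_le_lintegral₀ hfmeas.aemeasurable _
    _ = ∑ i, μ (A i) := by
        rw [lintegral_finsetSum _ fun i _ => measurable_one.indicator (hA i)]
        exact Finset.sum_congr rfl fun i _ => lintegral_indicator_one (hA i)

lemma mul_measure_kthSmallest_add_lt_le_sum {Ω : Type*} [MeasurableSpace Ω] (μ : Measure Ω)
    {n : ℕ} {a b : Fin n → Ω → ℝ} (ha : ∀ i, Measurable (a i)) (hb : ∀ i, Measurable (b i))
    (ε : ℝ) {ka kb : ℕ} (hka : ka ≤ n) (hkb : 1 ≤ kb) :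
    ((ka + 1 - kb : ℕ) : ℝ≥0∞) * μ {ω | kthSmallest ka (a · ω) + ε < kthSmallest kb (b · ω)}
      ≤ ∑ i, μ {ω | a i ω + ε < b i ω} := by
  have hsub : {ω | kthSmallest ka (a · ω) + ε < kthSmallest kb (b · ω)}
      ⊆ {ω | ka + 1 - kb ≤ #{i | ω ∈ {ω | a i ω + ε < b i ω}}} := fun ω hω =>
    Nat.sub_le_iff_le_add.2 (add_one_le_card_add_of_kthSmallest_add_lt _ _ ε hka hkb hω)
  calc _ ≤ _ := mul_le_mul_right (measure_mono hsub) _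
    _ ≤ _ := mul_measure_le_card_mem_le_sum μ
        (fun i => measurableSet_lt ((ha i).add_const ε) (hb i)) _

section QuantileIndex

variable (n : ℕ) {β : ℝ}

/-- The rank of `q_{n,β}` among `n` values: `empQuantile β v = kthSmallest (quantileIndex n β) v`. -/
noncomputable def quantileIndex (β : ℝ) : ℕ := ⌈(1 - β) * ((n : ℝ) + 1)⌉₊

lemma one_le_quantileIndex (hβ : β < 1) : 1 ≤ quantileIndex n β :=
  Nat.one_le_ceil_iff.2 (mul_pos (sub_pos.2 hβ) (by positivity))

lemma quantileIndex_le (hβ : 1 / ((n : ℝ) + 1) ≤ β) : quantileIndex n β ≤ n := by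
  refine Nat.ceil_le.2 ?_
  have hN : (0 : ℝ) < n + 1 := by positivity
  rw [div_le_iff₀ hN] at hβ
  linarith

lemma mul_add_quantileIndex_lt (δ : ℝ) (hβ : β ≤ 1) :
    δ * ((n : ℝ) + 1) + quantileIndex n β < quantileIndex n (β - δ) + 1 := by
  have hceil := Nat.ceil_lt_add_one (mul_nonneg (sub_nonneg.2 hβ) (n.cast_add_one_pos.le))
  have := Nat.le_ceil ((1 - (β - δ)) * ((n : ℝ) + 1))
  unfold quantileIndex
  linarith

end QuantileIndex

theorem stmt16_general {Ω : Type*} [MeasurableSpace Ω] (P : Measure Ω)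
    (n : ℕ) (a b : Fin n → Ω → ℝ)
    (hameas : ∀ i, Measurable (a i)) (hbmeas : ∀ i, Measurable (b i))
    (ε ν : ℝ)
    (hab : ∀ i, P {ω | a i ω + ε < b i ω} ≤ ENNReal.ofReal ν)
    (α : ℝ) (hα1 : 1/((n:ℝ)+1) + Real.sqrt ν ≤ α) (hα2 : α < 1) :
    (P {ω | empQuantile (α - Real.sqrt ν) (fun i => a i ω) + ε <
        empQuantile α (fun i => b i ω)}).toReal
      ≤ (n:ℝ) * Real.sqrt ν / ((n:ℝ)+1) ∧
    (n:ℝ) * Real.sqrt ν / ((n:ℝ)+1) ≤ Real.sqrt ν := by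
  set s := Real.sqrt ν
  set ka := quantileIndex n (α - s)
  set kb := quantileIndex n α
  have hs : 0 ≤ s := Real.sqrt_nonneg ν
  have hN : (0 : ℝ) < n + 1 := n.cast_add_one_pos
  have hgap : s * (n + 1) + kb < ka + 1 := mul_add_quantileIndex_lt n s hα2.le
  have hcount := mul_measure_kthSmallest_add_lt_le_sum P hameas hbmeas ε
    (quantileIndex_le n (by linarith : 1 / ((n : ℝ) + 1) ≤ α - s)) (one_le_quantileIndex n hα2)
  have hsum : ∑ i, P {ω | a i ω + ε < b i ω} ≤ ENNReal.ofReal (n * s ^ 2) := by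
    have hνs : ν ≤ s ^ 2 := Real.sq_sqrt' ▸ le_max_left ν 0
    calc _ ≤ ∑ _i : Fin n, ENNReal.ofReal (s ^ 2) :=
          Finset.sum_le_sum fun i _ => (hab i).trans (ENNReal.ofReal_le_ofReal hνs)
      _ = _ := by simp [ENNReal.ofReal_mul]
  set p := (P {ω | empQuantile (α - s) (fun i => a i ω) + ε < empQuantile α (fun i => b i ω)}).toReal
  have hmarkov : ((ka + 1 - kb : ℕ) : ℝ) * p ≤ n * s ^ 2 := by
    have := ENNReal.toReal_mono ENNReal.ofReal_ne_top (hcount.trans hsum)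
    rwa [ENNReal.toReal_mul, ENNReal.toReal_natCast, ENNReal.toReal_ofReal (by positivity)] at this
  have hkab : kb ≤ ka + 1 := by exact_mod_cast (by nlinarith : (kb : ℝ) ≤ ka + 1)
  rw [Nat.cast_sub hkab, Nat.cast_add, Nat.cast_one] at hmarkov
  have hp : 0 ≤ p := ENNReal.toReal_nonneg
  refine ⟨(le_div_iff₀ hN).2 ?_, (div_le_iff₀ hN).2 (by nlinarith)⟩
  rcases hs.eq_or_lt with hs0 | hs0
  · rw [← hs0] at hgap hmarkov ⊢
    nlinarith
  · nlinarith

/-- Let `a i, b i`, `i < n`, be real random variables, `ε ∈ ℝ`,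
`ν ∈ (0,1]` with `P(b i > a i + ε) ≤ ν` for every `i`, and let `α` satisfy
`1/(n+1) + √ν ≤ α < 1`. Then
`P(q_{n,α}{b i} > q_{n,α−√ν}{a i} + ε) ≤ n √ν / (n + 1) ≤ √ν`. -/
theorem stmt16 {Ω : Type*} [MeasurableSpace Ω] (P : Measure Ω) [IsProbabilityMeasure P]
    (n : ℕ) (hn : 1 ≤ n) (a b : Fin n → Ω → ℝ)
    (hameas : ∀ i, Measurable (a i)) (hbmeas : ∀ i, Measurable (b i))
    (ε ν : ℝ) (hν : ν ∈ Set.Ioc (0:ℝ) 1)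
    (hab : ∀ i, P {ω | a i ω + ε < b i ω} ≤ ENNReal.ofReal ν)
    (α : ℝ) (hα1 : 1/((n:ℝ)+1) + Real.sqrt ν ≤ α) (hα2 : α < 1) :
    (P {ω | empQuantile (α - Real.sqrt ν) (fun i => a i ω) + ε <
        empQuantile α (fun i => b i ω)}).toReal
      ≤ (n:ℝ) * Real.sqrt ν / ((n:ℝ)+1) ∧
    (n:ℝ) * Real.sqrt ν / ((n:ℝ)+1) ≤ Real.sqrt ν :=
  stmt16_general P n a b hameas hbmeas ε ν hab α hα1 hα2
end
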